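/- arXiv:2004.13705 — 4 statements merged into one kernel-verified Lean document; each statement's English description precedes it below -/
import Mathlib

section
/- Let a_1 ≤ ... ≤ a_B be real numbers with 1 < n ≤ B. Then the V-statistic V = ∑_{j=1}^B ((j^n-(j-1)^n)/B^n) a_j is at most the U-statistic U = ∑_{j=1}^B (C(j-1,n-1)/C(B,n)) a_j, with strict inequality if a_1 < a_n. -/
open Finset

lemma hs_aux (n : ℕ) (hn : 1 ≤ n) : ∀ m, ∑ i ∈ range m, Nat.choose i (n-1) = Nat.choose m n := by
  intro m
  induction m with
  | zero => simp [Nat.choose_eq_zero_of_lt hn]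
  | succ m ih =>
    rw [sum_range_succ, ih]
    have h : Nat.choose (m+1) n = Nat.choose m (n-1) + Nat.choose m n := by
      conv_lhs => rw [show n = (n-1)+1 from (Nat.succ_pred_eq_of_pos hn).symm]
      rw [Nat.choose_succ_succ' m (n-1), show n-1+1 = n by omega]
    rw [h, Nat.add_comm]

lemma key_nat (n m B : ℕ) (hmB : m ≤ B) :
    Nat.choose m n * B ^ n ≤ Nat.choose B n * m ^ n := by
  have h : Nat.descFactorial m n * B ^ n ≤ Nat.descFactorial B n * m ^ n := by
    rw [Nat.descFactorial_eq_prod_range, Nat.descFactorial_eq_prod_range,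
      pow_eq_prod_const, pow_eq_prod_const, ← prod_mul_distrib, ← prod_mul_distrib]
    apply Finset.prod_le_prod'
    intro i _
    calc (m - i) * B = m * B - i * B := by rw [Nat.sub_mul]
      _ ≤ B * m - i * m := by rw [Nat.mul_comm]; exact Nat.sub_le_sub_left (Nat.mul_le_mul_left i hmB) _
      _ = (B - i) * m := by rw [Nat.sub_mul]
  rw [Nat.descFactorial_eq_factorial_mul_choose, Nat.descFactorial_eq_factorial_mul_choose,
    Nat.mul_assoc, Nat.mul_assoc] at h
  exact Nat.le_of_mul_le_mul_left h (Nat.factorial_pos n)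

theorem V_stat_le_U_stat (n B : ℕ) (hn : 1 < n) (hnB : n ≤ B)
    (a : ℕ → ℝ) (ha : ∀ i j, 1 ≤ i → i ≤ j → j ≤ B → a i ≤ a j) :
    (∑ j ∈ Finset.Icc 1 B, ((j : ℝ) ^ n - ((j : ℝ) - 1) ^ n) / (B : ℝ) ^ n * a j
      ≤ ∑ j ∈ Finset.Icc 1 B, (Nat.choose (j - 1) (n - 1) : ℝ) / (Nat.choose B n : ℝ) * a j)
    ∧ (a 1 < a n →
      ∑ j ∈ Finset.Icc 1 B, ((j : ℝ) ^ n - ((j : ℝ) - 1) ^ n) / (B : ℝ) ^ n * a j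
      < ∑ j ∈ Finset.Icc 1 B, (Nat.choose (j - 1) (n - 1) : ℝ) / (Nat.choose B n : ℝ) * a j) := by
  have hB : 0 < B := by omega
  have hCB : 0 < Nat.choose B n := Nat.choose_pos hnB
  have hCBR : (0:ℝ) < (Nat.choose B n : ℝ) := by exact_mod_cast hCB
  have hBP : (0:ℝ) < (B:ℝ)^n := by positivity
  set c : ℕ → ℝ := fun j =>
    (Nat.choose (j - 1) (n - 1) : ℝ) / (Nat.choose B n : ℝ)
    - ((j : ℝ) ^ n - ((j : ℝ) - 1) ^ n) / (B : ℝ) ^ n with hc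
  set S : ℕ → ℝ := fun m => ∑ i ∈ range m, c (i+1) with hSdef
  -- value of partial sums
  have hSval : ∀ m, S m = (Nat.choose m n : ℝ)/(Nat.choose B n : ℝ) - (m:ℝ)^n/(B:ℝ)^n := by
    intro m
    have h1 : ∑ i ∈ range m, (Nat.choose (i+1-1) (n-1) : ℝ) = (Nat.choose m n : ℝ) := by
      rw [← hs_aux n (by omega) m]
      push_cast
      exact sum_congr rfl fun i _ => by norm_num
    have h2 : ∑ i ∈ range m, (((i+1:ℕ):ℝ)^n - (((i+1:ℕ):ℝ)-1)^n) = (m:ℝ)^n := by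
      have h0 : ∀ i ∈ range m, (((i+1:ℕ):ℝ)^n - (((i+1:ℕ):ℝ)-1)^n)
          = (((i+1:ℕ):ℝ)^n - ((i:ℕ):ℝ)^n) := by
        intro i _; push_cast; ring
      have hsub : ∑ x ∈ range m, ((((x+1:ℕ)):ℝ)^n - ((x:ℕ):ℝ)^n)
          = ((m:ℕ):ℝ)^n - ((0:ℕ):ℝ)^n := Finset.sum_range_sub (fun k => ((k:ℝ))^n) m
      rw [sum_congr rfl h0, hsub]
      norm_num [zero_pow (by omega : n ≠ 0)]
    have : S m = (∑ i ∈ range m, (Nat.choose (i+1-1) (n-1) : ℝ))/(Nat.choose B n : ℝ)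
        - (∑ i ∈ range m, (((i+1:ℕ):ℝ)^n - (((i+1:ℕ):ℝ)-1)^n))/(B:ℝ)^n := by
      rw [hSdef, sum_div, sum_div, ← sum_sub_distrib]
    rw [this, h1, h2]
  have hSle : ∀ m, m ≤ B → S m ≤ 0 := by
    intro m hm
    have h' : ((Nat.choose m n : ℝ)) * (B:ℝ)^n ≤ (Nat.choose B n : ℝ) * (m:ℝ)^n := by
      exact_mod_cast key_nat n m B hm
    rw [hSval m, sub_nonpos, div_le_div_iff₀ hCBR hBP]
    linarith
  have hSneg : ∀ m, 1 ≤ m → m < n → S m < 0 := by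
    intro m hm1 hmn
    have hmR : (0:ℝ) < (m:ℝ) := by exact_mod_cast hm1
    have hm0 : (0:ℝ) < (m:ℝ)^n / (B:ℝ)^n := div_pos (by positivity) hBP
    rw [hSval m, Nat.choose_eq_zero_of_lt hmn]
    simp only [Nat.cast_zero, zero_div, zero_sub]
    linarith
  have hSB : S B = 0 := by
    rw [hSval B, div_self (ne_of_gt hCBR), div_self (ne_of_gt hBP), sub_self]
  -- convert Icc sums to range sums
  have hIcc : ∀ (f : ℕ → ℝ), ∑ j ∈ Icc 1 B, f j = ∑ i ∈ range B, f (i+1) := by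
    intro f
    rw [← Finset.Ico_add_one_right_eq_Icc, Finset.sum_Ico_eq_sum_range]
    exact sum_congr (by norm_num) fun i _ => by rw [Nat.add_comm]
  -- summation by parts
  have key : ∑ j ∈ Finset.Icc 1 B, (Nat.choose (j - 1) (n - 1) : ℝ) / (Nat.choose B n : ℝ) * a j
      - ∑ j ∈ Finset.Icc 1 B, ((j : ℝ) ^ n - ((j : ℝ) - 1) ^ n) / (B : ℝ) ^ n * a j
      = ∑ i ∈ range (B-1), (a (i+2) - a (i+1)) * (-(S (i+1))) := by
    rw [← sum_sub_distrib]
    have : ∀ j ∈ Icc 1 B,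
        (Nat.choose (j - 1) (n - 1) : ℝ) / (Nat.choose B n : ℝ) * a j
        - ((j : ℝ) ^ n - ((j : ℝ) - 1) ^ n) / (B : ℝ) ^ n * a j = a j * c j := by
      intro j _; rw [hc]; ring
    rw [sum_congr rfl this, hIcc (fun j => a j * c j)]
    have hp := Finset.sum_range_by_parts (f := fun i => a (i+1)) (g := fun i => c (i+1)) B
    try simp only [smul_eq_mul] at hp
    rw [hp]
    have hB1 : B - 1 + 1 = B := by omega
    have : (∑ i ∈ range B, c (i+1)) = S B := rfl
    rw [this, hSB, mul_zero, zero_sub]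
    rw [← Finset.sum_neg_distrib]
    exact sum_congr rfl fun i _ => by rw [hSdef]; ring
  have hnonneg : ∀ i ∈ range (B-1), 0 ≤ (a (i+2) - a (i+1)) * (-(S (i+1))) := by
    intro i hi
    simp only [mem_range] at hi
    apply mul_nonneg
    · have := ha (i+1) (i+2) (by omega) (by omega) (by omega)
      linarith
    · have := hSle (i+1) (by omega)
      linarith
  have hge : 0 ≤ ∑ j ∈ Finset.Icc 1 B, (Nat.choose (j - 1) (n - 1) : ℝ) / (Nat.choose B n : ℝ) * a j
      - ∑ j ∈ Finset.Icc 1 B, ((j : ℝ) ^ n - ((j : ℝ) - 1) ^ n) / (B : ℝ) ^ n * a j := by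
    rw [key]; exact sum_nonneg hnonneg
  constructor
  · linarith
  · intro hlt
    -- find k with a k < a (k+1), 1 ≤ k, k+1 ≤ n
    have hex : ∃ k, 1 ≤ k ∧ k + 1 ≤ n ∧ a k < a (k+1) := by
      by_contra hcon
      push_neg at hcon
      have mono : ∀ m, 1 ≤ m → m ≤ n → a m ≤ a 1 := by
        intro m
        induction m with
        | zero => omega
        | succ m ih =>
          intro _ hmn
          rcases Nat.eq_zero_or_pos m with h0 | h1
          · subst h0; exact le_refl _
          · exact le_trans (hcon m h1 hmn) (ih h1 (by omega))
      exact absurd (mono n (by omega) (le_refl n)) (not_le.mpr hlt)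
    obtain ⟨k, hk1, hkn, hka⟩ := hex
    have hpos : 0 < ∑ i ∈ range (B-1), (a (i+2) - a (i+1)) * (-(S (i+1))) := by
      apply Finset.sum_pos' hnonneg
      refine ⟨k-1, ?_, ?_⟩
      · simp only [mem_range]; omega
      · have hk : k - 1 + 1 = k := by omega
        rw [show k-1+2 = k+1 by omega, hk]
        apply mul_pos
        · linarith
        · have := hSneg k hk1 (by omega)
          linarith
    linarith [key, hpos]
end

section
/- Let X_1,...,X_B be i.i.d. integrable real random variables and 1 < n ≤ B. Then the plug-in estimator V̂ = B^{-n} ∑_{(i_1,...,i_n)∈{1,...,B}^n} max{X_{i_1},...,X_{i_n}} satisfies E[V̂] ≤ θ_n = E[max{X_1,...,X_n}], i.e., V̂ is negatively biased. -/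
/-!
Every summand of `V̂` is the maximum of `X` over the set `S` of distinct indices occurring in the
tuple. By independence the distribution function of `max_{i ∈ S} X_i` is `F ^ #S`, so this maximum
has the law of `max{X_1, …, X_{#S}}` and, as `#S ≤ n`, its mean is at most `θ_n`.
-/

open MeasureTheory ProbabilityTheory Finset

namespace ProbabilityTheory

variable {Ω ι : Type*} [MeasurableSpace Ω] {μ : Measure Ω} {X : ι → Ω → ℝ}

lemma aemeasurable_finset_sup' {S : Finset ι} (hS : S.Nonempty)
    (hX : ∀ i ∈ S, AEMeasurable (X i) μ) : AEMeasurable (S.sup' hS X) μ :=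
  Finset.sup'_induction (p := (AEMeasurable · μ)) hS X (fun _ hf _ hg => hf.sup hg) hX

lemma integrable_finset_sup' {S : Finset ι} (hS : S.Nonempty)
    (hX : ∀ i ∈ S, Integrable (X i) μ) : Integrable (S.sup' hS X) μ :=
  Finset.sup'_induction (p := (Integrable · μ)) hS X (fun _ hf _ hg => hf.sup hg) hX

lemma iIndepFun.measure_finset_sup'_preimage_Iic (hindep : iIndepFun X μ) {S : Finset ι}
    (hS : S.Nonempty) (t : ℝ) :
    μ (S.sup' hS X ⁻¹' Set.Iic t) = ∏ i ∈ S, μ (X i ⁻¹' Set.Iic t) := by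
  have hpre : S.sup' hS X ⁻¹' Set.Iic t = ⋂ i ∈ S, X i ⁻¹' Set.Iic t := by
    ext ω
    simp [Finset.sup'_apply, Finset.sup'_le_iff]
  rw [hpre]
  exact hindep.measure_inter_preimage_eq_mul S fun _ _ => measurableSet_Iic

lemma iIndepFun.identDistrib_finset_sup' [IsFiniteMeasure μ] (hindep : iIndepFun X μ)
    (hident : ∀ i j, IdentDistrib (X i) (X j) μ μ) {S T : Finset ι} (hS : S.Nonempty)
    (hT : T.Nonempty) (hST : #S = #T) :
    IdentDistrib (S.sup' hS X) (T.sup' hT X) μ μ := by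
  have hX : ∀ i, AEMeasurable (X i) μ := fun i => (hident i i).aemeasurable_fst
  obtain ⟨j, -⟩ := id hS
  have hcdf : ∀ (U : Finset ι) (hU : U.Nonempty) (t : ℝ),
      μ.map (U.sup' hU X) (Set.Iic t) = μ (X j ⁻¹' Set.Iic t) ^ #U := by
    intro U hU t
    rw [Measure.map_apply_of_aemeasurable (aemeasurable_finset_sup' hU fun i _ => hX i)
        measurableSet_Iic, hindep.measure_finset_sup'_preimage_Iic hU,
      Finset.prod_congr rfl fun i _ => (hident i j).measure_mem_eq measurableSet_Iic,
      Finset.prod_const]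
  refine ⟨aemeasurable_finset_sup' hS fun i _ => hX i,
    aemeasurable_finset_sup' hT fun i _ => hX i, ?_⟩
  have := Measure.isFiniteMeasure_map μ (S.sup' hS X)
  exact Measure.ext_of_Iic _ _ fun t => by rw [hcdf S hS t, hcdf T hT t, hST]

lemma iIndepFun.integral_finset_sup'_le_of_card_le [IsFiniteMeasure μ] (hindep : iIndepFun X μ)
    (hident : ∀ i j, IdentDistrib (X i) (X j) μ μ) (hint : ∀ i, Integrable (X i) μ)
    {S T : Finset ι} (hS : S.Nonempty) (hT : T.Nonempty) (hST : #S ≤ #T) :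
    ∫ ω, S.sup' hS X ω ∂μ ≤ ∫ ω, T.sup' hT X ω ∂μ := by
  obtain ⟨U, hUT, hUS⟩ := Finset.exists_subset_card_eq hST
  have hU : U.Nonempty := Finset.card_pos.mp (hUS ▸ hS.card_pos)
  calc ∫ ω, S.sup' hS X ω ∂μ = ∫ ω, U.sup' hU X ω ∂μ :=
        (hindep.identDistrib_finset_sup' hident hS hU hUS.symm).integral_eq
    _ ≤ ∫ ω, T.sup' hT X ω ∂μ :=
        integral_mono (integrable_finset_sup' hU fun i _ => hint i)
          (integrable_finset_sup' hT fun i _ => hint i) (Finset.sup'_mono X hUT hU)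

end ProbabilityTheory

lemma integral_sum_div_card_le {Ω α : Type*} [MeasurableSpace Ω] {μ : Measure Ω} [Fintype α]
    [Nonempty α] {g : α → Ω → ℝ} {θ : ℝ} (hg : ∀ a, Integrable (g a) μ)
    (hθ : ∀ a, ∫ ω, g a ω ∂μ ≤ θ) :
    ∫ ω, (∑ a, g a ω) / Fintype.card α ∂μ ≤ θ := by
  rw [integral_div, integral_finsetSum _ fun a _ => hg a,
    div_le_iff₀ (by exact_mod_cast Fintype.card_pos)]
  calc ∑ a, ∫ ω, g a ω ∂μ ≤ ∑ _a : α, θ := Finset.sum_le_sum fun a _ => hθ a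
    _ = θ * Fintype.card α := by simp [mul_comm]

theorem V_stat_negatively_biased {Ω : Type*} [MeasurableSpace Ω] (μ : Measure Ω)
    [IsProbabilityMeasure μ] (n B : ℕ) (hn : 1 < n) (hnB : n ≤ B)
    (X : ℕ → Ω → ℝ)
    (hindep : iIndepFun X μ)
    (hident : ∀ i, IdentDistrib (X i) (X 0) μ μ)
    (hint : ∀ i, Integrable (X i) μ) :
    ∫ ω, (∑ f : Fin n → Fin B,
        Finset.univ.sup' ⟨⟨0, by omega⟩, Finset.mem_univ _⟩ (fun i => X ((f i : ℕ) + 1) ω))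
          / (B : ℝ) ^ n ∂μ
    ≤ ∫ ω, (Finset.Icc 1 n).sup' (by simpa [Finset.nonempty_Icc] using hn.le) (fun i => X i ω) ∂μ := by
  have hident' (i j : ℕ) : IdentDistrib (X i) (X j) μ μ := (hident i).trans (hident j).symm
  have : NeZero n := ⟨by omega⟩
  have : Nonempty (Fin B) := ⟨⟨0, by omega⟩⟩
  have htuple (f : Fin n → Fin B) :
      (fun ω => Finset.univ.sup' ⟨⟨0, by omega⟩, Finset.mem_univ _⟩
        (fun i => X ((f i : ℕ) + 1) ω)) =
      (Finset.univ.image fun i => (f i : ℕ) + 1).sup' (Finset.univ_nonempty.image _) X := by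
    ext ω
    rw [Finset.sup'_apply, Finset.sup'_image]
    rfl
  rw [show (B : ℝ) ^ n = Fintype.card (Fin n → Fin B) by simp]
  refine integral_sum_div_card_le (fun f => ?_) (fun f => ?_) <;> rw [htuple f]
  · exact integrable_finset_sup' _ fun i _ => hint i
  · convert hindep.integral_finset_sup'_le_of_card_le hident' hint
        (Finset.univ_nonempty.image fun i => (f i : ℕ) + 1) (Finset.nonempty_Icc.mpr hn.le)
        ((Finset.card_image_le).trans (by simp)) using 2
    exact funext fun ω => (Finset.sup'_apply _ _ _).symm
end

section
/- Let a_1 ≤ ... ≤ a_B be reals, F̂_B the empirical CDF of this sample, and n ≥ 1. Then ∑_{j=1}^B (F̂_B(a_j)^n - F̂_B(a_{j-1})^n) · a_j = B^{-n} ∑_{(i_1,...,i_n)} max{a_{i_1},...,a_{i_n}}, where F̂_B(a_0) := 0 and the right sum is over all n-tuples from {1,...,B}; this holds even when the a_j contain ties. -/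
/-!
Raising the count of sample points `≤ t` to the `n`-th power counts the `n`-tuples whose maximum
is `≤ t`, so `B ^ n * F̂_B(t) ^ n = ∑_f 1[max f ≤ t]`. After exchanging sums, each tuple `f`
contributes `∑_j (1[M_f ≤ a_j] - 1[M_f ≤ a_{j-1}]) a_j` with `M_f = max f`. Since `a` is monotone,
`j ↦ 1[M_f ≤ a_j]` is a single step at the first index `J` with `a_J = M_f`, so the differences
collapse to `a_J = M_f`, ties or not.
-/

open Finset

theorem sum_boole_pow {R κ : Type*} [CommSemiring R] [Fintype κ] (p : κ → Prop) [DecidablePred p]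
    (n : ℕ) :
    (∑ k, if p k then (1 : R) else 0) ^ n = ∑ f : Fin n → κ, if ∀ i, p (f i) then 1 else 0 := by
  rw [← Fin.prod_const, prod_univ_sum, Fintype.piFinset_univ]
  congr! with f
  convert Fintype.prod_boole (M₀ := R) (p := fun i => p (f i))

theorem sum_Icc_one_eq_sum_fin {M : Type*} [AddCommMonoid M] (B : ℕ) (g : ℕ → M) :
    ∑ i ∈ Icc 1 B, g i = ∑ k : Fin B, g (k + 1) := by
  rw [Fin.sum_univ_eq_sum_range (fun k => g (k + 1)), range_eq_Ico, sum_Ico_add' g 0 B 1]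
  rfl

theorem sum_Icc_boole_le_pow {n B : ℕ} (hne : (univ : Finset (Fin n)).Nonempty)
    (a : ℕ → ℝ) (t : ℝ) :
    (∑ i ∈ Icc 1 B, if a i ≤ t then (1 : ℝ) else 0) ^ n
      = ∑ f : Fin n → Fin B, if univ.sup' hne (fun i => a (f i + 1)) ≤ t then 1 else 0 := by
  simp only [sum_Icc_one_eq_sum_fin B, sum_boole_pow, sup'_le_iff, mem_univ, true_implies]

theorem sum_Icc_boole_le_sub_lag_mul {B J : ℕ} (hJ : J ∈ Icc 1 B) (a : ℕ → ℝ) :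
    ∑ j ∈ Icc 1 B,
      ((if J ≤ j then (1 : ℝ) else 0) - if j = 1 then 0 else if J ≤ j - 1 then 1 else 0) * a j
      = a J := by
  calc _ = ∑ j ∈ Icc 1 B, if j = J then a j else 0 := sum_congr rfl fun j hj => ?_
    _ = a J := by simp [hJ]
  obtain ⟨hJ1, -⟩ := mem_Icc.1 hJ
  obtain ⟨hj1, -⟩ := mem_Icc.1 hj
  split_ifs <;> first | omega | ring

theorem exists_first_le_of_monotoneOn {B m : ℕ} {a : ℕ → ℝ} (ha : MonotoneOn a (Icc 1 B))
    (hm : m ∈ Icc 1 B) : ∃ J ∈ Icc 1 B, a J = a m ∧ ∀ j ∈ Icc 1 B, a m ≤ a j ↔ J ≤ j := by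
  set s := (Icc 1 B).filter (a m ≤ a ·)
  have hms : m ∈ s := mem_filter.2 ⟨hm, le_rfl⟩
  obtain ⟨hJ, hJm⟩ := mem_filter.1 (s.min'_mem ⟨m, hms⟩)
  refine ⟨s.min' ⟨m, hms⟩, hJ, le_antisymm (ha hJ hm (s.min'_le m hms)) hJm, fun j hj => ?_⟩
  exact ⟨fun h => s.min'_le j (mem_filter.2 ⟨hj, h⟩), fun h => hJm.trans (ha hJ hj h)⟩

theorem sum_Icc_boole_sub_lag_mul_of_monotoneOn {B m : ℕ} {a : ℕ → ℝ}
    (ha : MonotoneOn a (Icc 1 B)) (hm : m ∈ Icc 1 B) :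
    ∑ j ∈ Icc 1 B,
      ((if a m ≤ a j then (1 : ℝ) else 0) - if j = 1 then 0 else if a m ≤ a (j - 1) then 1 else 0)
        * a j = a m := by
  obtain ⟨J, hJ, haJ, hiff⟩ := exists_first_le_of_monotoneOn ha hm
  calc _ = ∑ j ∈ Icc 1 B,
        ((if J ≤ j then (1 : ℝ) else 0) - if j = 1 then 0 else if J ≤ j - 1 then 1 else 0) * a j :=
        sum_congr rfl fun j hj => ?_
    _ = a m := haJ ▸ sum_Icc_boole_le_sub_lag_mul hJ a
  rcases eq_or_ne j 1 with rfl | h1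
  · simp only [hiff 1 hj, if_true]
  · have hj' : j - 1 ∈ Icc 1 B := by simp only [mem_Icc] at hj ⊢; omega
    simp only [hiff j hj, hiff (j - 1) hj', if_neg h1]

theorem sum_Icc_sum_boole_sub_lag_mul {σ : Type*} {B : ℕ} {a : ℕ → ℝ}
    (ha : MonotoneOn a (Icc 1 B)) (s : Finset σ) (v : σ → ℝ)
    (hv : ∀ x ∈ s, ∃ m ∈ Icc 1 B, a m = v x) :
    ∑ j ∈ Icc 1 B,
      ((∑ x ∈ s, if v x ≤ a j then (1 : ℝ) else 0)
        - if j = 1 then 0 else ∑ x ∈ s, if v x ≤ a (j - 1) then 1 else 0) * a j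
      = ∑ x ∈ s, v x := by
  have hlag : ∀ j, (if j = 1 then 0 else ∑ x ∈ s, if v x ≤ a (j - 1) then (1 : ℝ) else 0)
      = ∑ x ∈ s, if j = 1 then 0 else if v x ≤ a (j - 1) then 1 else 0 := by
    intro j; split_ifs <;> simp
  simp only [hlag, ← sum_sub_distrib, sum_mul]
  rw [sum_comm]
  refine sum_congr rfl fun x hx => ?_
  obtain ⟨m, hm, hmx⟩ := hv x hx
  rw [← hmx]
  exact sum_Icc_boole_sub_lag_mul_of_monotoneOn ha hm

theorem meanmax_eq_V_stat (n B : ℕ) (hn : 1 ≤ n)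
    (a : ℕ → ℝ) (ha : ∀ i j, 1 ≤ i → i ≤ j → j ≤ B → a i ≤ a j) :
    ∑ j ∈ Finset.Icc 1 B,
        (((∑ i ∈ Finset.Icc 1 B, if a i ≤ a j then (1 : ℝ) else 0) / B) ^ n
          - if j = 1 then (0 : ℝ)
            else ((∑ i ∈ Finset.Icc 1 B, if a i ≤ a (j - 1) then (1 : ℝ) else 0) / B) ^ n)
        * a j
    = (∑ f : Fin n → Fin B,
        Finset.univ.sup' ⟨⟨0, by omega⟩, Finset.mem_univ _⟩ (fun i => a ((f i : ℕ) + 1)))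
        / (B : ℝ) ^ n := by
  set hne : (univ : Finset (Fin n)).Nonempty := ⟨⟨0, by omega⟩, mem_univ _⟩
  have hmono : MonotoneOn a (Icc 1 B) := fun i hi j hj hij =>
    ha i j (mem_Icc.1 hi).1 hij (mem_Icc.1 hj).2
  have hmax (f : Fin n → Fin B) : ∃ m ∈ Icc 1 B, a m = univ.sup' hne (fun i => a (f i + 1)) := by
    obtain ⟨i, -, hi⟩ := exists_mem_eq_sup' hne (fun i => a (f i + 1))
    exact ⟨f i + 1, mem_Icc.2 ⟨by omega, by omega⟩, hi.symm⟩
  simp only [div_pow, sum_Icc_boole_le_pow hne]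
  rw [← sum_Icc_sum_boole_sub_lag_mul hmono univ _ fun f _ => hmax f, sum_div]
  refine sum_congr rfl fun j _ => ?_
  split_ifs <;> ring
end

section
/- For fixed n and i.i.d. integrable X_1, X_2, ... with sample of size B, the bias of the plug-in estimator V̂_n^B tends to 0 as B → ∞; precisely, the weights (j^n-(j-1)^n)/B^n converge to the U-statistic weights C(j-1,n-1)/C(B,n) in the sense that ∑_{j=1}^B |(j^n-(j-1)^n)/B^n - C(j-1,n-1)/C(B,n)| → 0 as B → ∞. -/
open Filter Finset

private lemma tele_sum (f : ℕ → ℝ) : ∀ B : ℕ, ∑ j ∈ Finset.Icc 1 B, (f j - f (j - 1)) = f B - f 0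
  | 0 => by simp
  | B + 1 => by
    rw [Finset.sum_Icc_succ_top (Nat.le_add_left 1 B), tele_sum f B]
    simp only [Nat.add_sub_cancel]
    ring

private lemma pow_sub_pow_upper (m : ℕ) {x : ℝ} (hx : 1 ≤ x) :
    x ^ (m + 1) - (x - 1) ^ (m + 1) ≤ ((m : ℝ) + 1) * x ^ m := by
  have h := geom_sum₂_mul x (x - 1) (m + 1)
  rw [sub_sub_cancel, mul_one] at h
  rw [← h]
  calc ∑ i ∈ range (m + 1), x ^ i * (x - 1) ^ (m + 1 - 1 - i)
      ≤ ∑ _i ∈ range (m + 1), x ^ m := by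
        refine Finset.sum_le_sum fun i hi => ?_
        have hi' : i ≤ m := by simpa [Nat.lt_succ_iff] using hi
        have h1 : x ^ i * (x - 1) ^ (m + 1 - 1 - i) ≤ x ^ i * x ^ (m + 1 - 1 - i) := by
          have h0 : (0:ℝ) ≤ x - 1 := by linarith
          gcongr
          linarith
        refine h1.trans (le_of_eq ?_)
        rw [← pow_add]
        congr 1
        omega
    _ = ((m : ℝ) + 1) * x ^ m := by
        rw [Finset.sum_const, card_range, nsmul_eq_mul]
        push_cast; ring

private lemma pow_sub_pow_lower (m : ℕ) {x : ℝ} (hx : 1 ≤ x) :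
    ((m : ℝ) + 1) * (x - 1) ^ m ≤ x ^ (m + 1) - (x - 1) ^ (m + 1) := by
  have h := geom_sum₂_mul x (x - 1) (m + 1)
  rw [sub_sub_cancel, mul_one] at h
  rw [← h]
  calc ((m : ℝ) + 1) * (x - 1) ^ m
      = ∑ _i ∈ range (m + 1), (x - 1) ^ m := by
        rw [Finset.sum_const, card_range, nsmul_eq_mul]; push_cast; ring
    _ ≤ ∑ i ∈ range (m + 1), x ^ i * (x - 1) ^ (m + 1 - 1 - i) := by
        refine Finset.sum_le_sum fun i hi => ?_
        have hi' : i ≤ m := by simpa [Nat.lt_succ_iff] using hi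
        have h0 : (0:ℝ) ≤ x - 1 := by linarith
        calc (x - 1) ^ m = (x - 1) ^ i * (x - 1) ^ (m + 1 - 1 - i) := by
              rw [← pow_add]; congr 1; omega
          _ ≤ x ^ i * (x - 1) ^ (m + 1 - 1 - i) := by
              gcongr; linarith

private lemma sum_choose_pred' (m : ℕ) :
    ∀ B : ℕ, ∑ j ∈ Finset.Icc 1 B, (j - 1).choose m = B.choose (m + 1)
  | 0 => by simp
  | B + 1 => by
    rw [Finset.sum_Icc_succ_top (Nat.le_add_left 1 B), sum_choose_pred' m B,
      Nat.add_sub_cancel, Nat.choose_succ_succ']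
    omega

private lemma sum_df (m B : ℕ) :
    (m + 1) * ∑ j ∈ Finset.Icc 1 B, (j - 1).descFactorial m = B.descFactorial (m + 1) := by
  simp only [Nat.descFactorial_eq_factorial_mul_choose, ← Finset.mul_sum, sum_choose_pred',
    Nat.factorial_succ]
  ring

private lemma choose_div_eq (m j B : ℕ) (hB : m + 1 ≤ B) :
    ((j - 1).choose m : ℝ) / (B.choose (m + 1) : ℝ)
      = ((m : ℝ) + 1) * ((j - 1).descFactorial m : ℝ) / (B.descFactorial (m + 1) : ℝ) := by
  have h1 : (j - 1).descFactorial m = Nat.factorial m * (j - 1).choose m :=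
    Nat.descFactorial_eq_factorial_mul_choose _ _
  have h2 : B.descFactorial (m + 1) = Nat.factorial (m + 1) * B.choose (m + 1) :=
    Nat.descFactorial_eq_factorial_mul_choose _ _
  have hC : 0 < B.choose (m + 1) := Nat.choose_pos hB
  have hC' : ((B.choose (m + 1) : ℝ)) ≠ 0 := by exact_mod_cast hC.ne'
  have hm : ((Nat.factorial m : ℝ)) ≠ 0 := by exact_mod_cast (Nat.factorial_pos m).ne'
  rw [h1, h2, Nat.factorial_succ]
  push_cast
  field_simp

private lemma key_bound (m B : ℕ) (hB : m + 1 ≤ B) :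
    ∑ j ∈ Finset.Icc 1 B,
      |((j : ℝ) ^ (m + 1) - ((j : ℝ) - 1) ^ (m + 1)) / (B : ℝ) ^ (m + 1)
        - (Nat.choose (j - 1) m : ℝ) / (Nat.choose B (m + 1) : ℝ)|
      ≤ (((m : ℝ) + 1) + 2 * ((m : ℝ) + 1) ^ 2) / B := by
  have hB1 : 1 ≤ B := by omega
  have hBR : (0:ℝ) < (B:ℝ) := by exact_mod_cast Nat.pos_of_ne_zero (by omega)
  set N : ℝ := (B : ℝ) ^ (m + 1) with hNdef
  have hN0 : 0 < N := pow_pos hBR _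
  set D : ℝ := (B.descFactorial (m + 1) : ℝ) with hDdef
  have hD0 : 0 < D := by
    have h : B.descFactorial (m + 1) ≠ 0 := by
      rw [Ne, Nat.descFactorial_eq_zero_iff_lt]; omega
    rw [hDdef]
    exact_mod_cast Nat.pos_of_ne_zero h
  have hDN : D ≤ N := by
    rw [hDdef, hNdef]
    exact_mod_cast Nat.descFactorial_le_pow B (m + 1)
  have hcast : ∀ j ∈ Finset.Icc 1 B, ((j - 1 : ℕ) : ℝ) = (j : ℝ) - 1 := by
    intro j hj
    rw [Finset.mem_Icc] at hj
    push_cast [hj.1]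
    ring
  -- termwise bound
  have hterm : ∀ j ∈ Finset.Icc 1 B,
      |((j : ℝ) ^ (m + 1) - ((j : ℝ) - 1) ^ (m + 1)) / N
        - (Nat.choose (j - 1) m : ℝ) / (Nat.choose B (m + 1) : ℝ)|
      ≤ ((m : ℝ) + 1) * ((j : ℝ) ^ m - ((j : ℝ) - 1) ^ m) / N
        + (((m : ℝ) + 1) * ((j : ℝ) - 1) ^ m
            - ((m : ℝ) + 1) * ((j - 1).descFactorial m : ℝ)) / N
        + ((m : ℝ) + 1) * ((j - 1).descFactorial m : ℝ) * (1 / D - 1 / N) := by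
    intro j hj
    have hcj := hcast j hj
    rw [Finset.mem_Icc] at hj
    have hx : (1:ℝ) ≤ (j:ℝ) := by exact_mod_cast hj.1
    have hx0 : (0:ℝ) ≤ (j:ℝ) - 1 := by linarith
    have hdf : ((j - 1).descFactorial m : ℝ) ≤ ((j : ℝ) - 1) ^ m := by
      rw [← hcj]
      exact_mod_cast Nat.descFactorial_le_pow (j - 1) m
    have hdf0 : (0:ℝ) ≤ ((j - 1).descFactorial m : ℝ) := Nat.cast_nonneg _
    rw [choose_div_eq m j B hB]
    have hlow := pow_sub_pow_lower m hx
    have hupp := pow_sub_pow_upper m hx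
    have hmono : ((j:ℝ) - 1) ^ m ≤ (j:ℝ) ^ m := pow_le_pow_left₀ hx0 (by linarith) m
    have hinv : 1 / N ≤ 1 / D := one_div_le_one_div_of_le hD0 hDN
    have hF1 : ((m : ℝ) + 1) * ((j:ℝ) - 1) ^ m / N
        ≤ ((j : ℝ) ^ (m + 1) - ((j : ℝ) - 1) ^ (m + 1)) / N := by gcongr
    have hF2 : ((j : ℝ) ^ (m + 1) - ((j : ℝ) - 1) ^ (m + 1)) / N
        ≤ ((m : ℝ) + 1) * (j:ℝ) ^ m / N := by gcongr
    have hT3 : (0:ℝ) ≤ ((m : ℝ) + 1) * ((j - 1).descFactorial m : ℝ) * (1 / D - 1 / N) := by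
      apply mul_nonneg (by positivity)
      linarith
    have eU : ((m : ℝ) + 1) * ((j - 1).descFactorial m : ℝ) / D
        - ((m : ℝ) + 1) * ((j - 1).descFactorial m : ℝ) / N
        = ((m : ℝ) + 1) * ((j - 1).descFactorial m : ℝ) * (1 / D - 1 / N) := by ring
    have hT2 : (0:ℝ) ≤ (((m : ℝ) + 1) * ((j : ℝ) - 1) ^ m
        - ((m : ℝ) + 1) * ((j - 1).descFactorial m : ℝ)) / N := by
      apply div_nonneg _ hN0.le
      nlinarith
    have hT1 : (0:ℝ) ≤ ((m : ℝ) + 1) * ((j : ℝ) ^ m - ((j : ℝ) - 1) ^ m) / N := by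
      apply div_nonneg _ hN0.le
      nlinarith
    have e2 : ((m : ℝ) + 1) * (j:ℝ) ^ m / N
        = ((m : ℝ) + 1) * ((j:ℝ) - 1) ^ m / N
          + ((m : ℝ) + 1) * ((j : ℝ) ^ m - ((j : ℝ) - 1) ^ m) / N := by ring
    have e3 : ((m : ℝ) + 1) * ((j:ℝ) - 1) ^ m / N
        = ((m : ℝ) + 1) * ((j - 1).descFactorial m : ℝ) / N
          + (((m : ℝ) + 1) * ((j : ℝ) - 1) ^ m
              - ((m : ℝ) + 1) * ((j - 1).descFactorial m : ℝ)) / N := by ring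
    rw [abs_le]
    constructor <;> linarith
  have hstep := Finset.sum_le_sum hterm
  refine le_trans hstep ?_
  rw [Finset.sum_add_distrib, Finset.sum_add_distrib]
  -- sum of t1
  have hS1 : ∑ j ∈ Finset.Icc 1 B, ((m : ℝ) + 1) * ((j : ℝ) ^ m - ((j : ℝ) - 1) ^ m) / N
      ≤ ((m : ℝ) + 1) / B := by
    have hc : ∀ j ∈ Finset.Icc 1 B,
        ((m : ℝ) + 1) * ((j : ℝ) ^ m - ((j : ℝ) - 1) ^ m) / N
        = (((m : ℝ) + 1) / N) * (((fun k : ℕ => (k:ℝ)^m) j) - ((fun k : ℕ => (k:ℝ)^m) (j - 1))) := by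
      intro j hj
      simp only
      rw [hcast j hj]
      ring
    rw [Finset.sum_congr rfl hc, ← Finset.mul_sum, tele_sum (fun k : ℕ => (k:ℝ)^m) B]
    simp only [Nat.cast_zero]
    have h0m : (0:ℝ) ≤ (0:ℝ) ^ m := by positivity
    have key : (((m : ℝ) + 1) / N) * ((B:ℝ)^m - 0 ^ m) ≤ (((m : ℝ) + 1) / N) * (B:ℝ)^m := by
      apply mul_le_mul_of_nonneg_left _ (by positivity)
      linarith
    refine key.trans (le_of_eq ?_)
    rw [hNdef, pow_succ]
    field_simp
  -- sum of descFactorials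
  have hsum2b : ∑ j ∈ Finset.Icc 1 B, ((m : ℝ) + 1) * ((j - 1).descFactorial m : ℝ) = D := by
    rw [← Finset.mul_sum, hDdef, ← sum_df m B]
    push_cast
    ring
  -- sum of t2
  have hS2 : ∑ j ∈ Finset.Icc 1 B,
      (((m : ℝ) + 1) * ((j : ℝ) - 1) ^ m - ((m : ℝ) + 1) * ((j - 1).descFactorial m : ℝ)) / N
      ≤ 1 - D / N := by
    have hsum2a : ∑ j ∈ Finset.Icc 1 B, ((m : ℝ) + 1) * ((j : ℝ) - 1) ^ m ≤ N := by
      have h1 : ∑ j ∈ Finset.Icc 1 B, ((m : ℝ) + 1) * ((j : ℝ) - 1) ^ m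
          ≤ ∑ j ∈ Finset.Icc 1 B, ((j : ℝ) ^ (m + 1) - ((j : ℝ) - 1) ^ (m + 1)) := by
        refine Finset.sum_le_sum fun j hj => ?_
        rw [Finset.mem_Icc] at hj
        exact pow_sub_pow_lower m (by exact_mod_cast hj.1)
      refine h1.trans ?_
      have hc : ∀ j ∈ Finset.Icc 1 B,
          ((j : ℝ) ^ (m + 1) - ((j : ℝ) - 1) ^ (m + 1))
          = ((fun k : ℕ => (k:ℝ)^(m+1)) j) - ((fun k : ℕ => (k:ℝ)^(m+1)) (j - 1)) := by
        intro j hj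
        simp only
        rw [hcast j hj]
      rw [Finset.sum_congr rfl hc, tele_sum (fun k : ℕ => (k:ℝ)^(m+1)) B]
      simp only [Nat.cast_zero, zero_pow (Nat.succ_ne_zero m)]
      rw [hNdef]
      simp
    rw [← Finset.sum_div, Finset.sum_sub_distrib, hsum2b]
    rw [div_le_iff₀ hN0]
    have : (1 - D / N) * N = N - D := by field_simp
    rw [this]
    linarith
  -- sum of t3
  have hS3 : ∑ j ∈ Finset.Icc 1 B,
      ((m : ℝ) + 1) * ((j - 1).descFactorial m : ℝ) * (1 / D - 1 / N) = 1 - D / N := by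
    rw [← Finset.sum_mul, hsum2b]
    field_simp
  -- Bernoulli bound
  have hbern : 1 - D / N ≤ ((m : ℝ) + 1) ^ 2 / B := by
    have hmB : m ≤ B := by omega
    have hnat : (B - m) ^ (m + 1) ≤ B.descFactorial (m + 1) := by
      have := Nat.pow_sub_le_descFactorial B (m + 1)
      simpa [Nat.succ_sub_succ] using this
    have h2 : ((B : ℝ) - m) ^ (m + 1) ≤ D := by
      have h1 : ((B - m : ℕ) : ℝ) = (B : ℝ) - m := by push_cast [hmB]; ring
      rw [hDdef, ← h1]
      exact_mod_cast hnat
    have hfrac : (m : ℝ) / B ≤ 1 := by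
      rw [div_le_one hBR]
      exact_mod_cast hmB
    have hb : (-2:ℝ) ≤ -((m:ℝ)/B) := by linarith
    have hbern' := one_add_mul_le_pow hb (m + 1)
    have h3 : (1 + -((m:ℝ)/B)) ^ (m + 1) = ((B:ℝ) - m) ^ (m + 1) / N := by
      rw [hNdef, ← div_pow]
      congr 1
      field_simp
      ring
    rw [h3] at hbern'
    have h4 : ((B:ℝ) - m) ^ (m + 1) / N ≤ D / N := by gcongr
    have h5 : ((m:ℝ) + 1) * ((m:ℝ)/B) ≤ ((m:ℝ) + 1) ^ 2 / B := by
      rw [pow_two, ← mul_div_assoc]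
      gcongr
      linarith
    push_cast at hbern'
    have e : ((m:ℝ) + 1) * -((m:ℝ)/B) = -(((m:ℝ) + 1) * ((m:ℝ)/B)) := by ring
    linarith
  have hsplit : (((m : ℝ) + 1) + 2 * ((m : ℝ) + 1) ^ 2) / B
      = ((m : ℝ) + 1) / B + ((m : ℝ) + 1) ^ 2 / B + ((m : ℝ) + 1) ^ 2 / B := by ring
  rw [hsplit]
  have := hS3.le
  linarith [hS3.le, hS1, hS2, hbern]

theorem weights_tv_convergence (n : ℕ) (hn : 0 < n) :
    Tendsto (fun B : ℕ =>
        ∑ j ∈ Finset.Icc 1 B,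
          |((j : ℝ) ^ n - ((j : ℝ) - 1) ^ n) / (B : ℝ) ^ n
            - (Nat.choose (j - 1) (n - 1) : ℝ) / (Nat.choose B n : ℝ)|)
      atTop (nhds 0) := by
  obtain ⟨m, rfl⟩ : ∃ m, n = m + 1 := ⟨n - 1, by omega⟩
  apply squeeze_zero' (g := fun B : ℕ => (((m : ℝ) + 1) + 2 * ((m : ℝ) + 1) ^ 2) / B)
  · exact Eventually.of_forall fun B => Finset.sum_nonneg fun j _ => abs_nonneg _
  · filter_upwards [eventually_ge_atTop (m + 1)] with B hB
    simpa [Nat.add_sub_cancel] using key_bound m B hB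
  · exact tendsto_const_div_atTop_nhds_zero_nat _
end
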